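/- arXiv:2410.21105 — 4 statements merged into one kernel-verified Lean document; each statement's English description precedes it below -/
import Mathlib

section
/- Taking differences of the conditional parallel trends condition evaluated at (d_t', d_{t-1}''=0) and at (0, 0) yields conditional effect homogeneity: E[Y_t(d') - Y_t(0) | D_t=d_t, D_{t-1}=0, X] = E[Y_t(d') - Y_t(0) | D_t=d_t', D_{t-1}=0, X]. -/
/-- differencing the conditional parallel trends condition at
`(d', 0)` and `(0, 0)` yields conditional effect homogeneity.
`CE a f` abstracts `E[f | D_t = a, D_{t-1} = 0, X]` (a function of ω through X);
`Ytpot a = Y_t(a)` and `Ytm1pot a = Y_{t-1}(a)` are potential outcomes. -/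
theorem stmt_4 {Ω : Type*}
    (CE : ℝ → (Ω → ℝ) → Ω → ℝ)
    (hCE_sub : ∀ a f g, CE a (f - g) = CE a f - CE a g)
    (Ytpot Ytm1pot : ℝ → Ω → ℝ)
    (dt d' : ℝ) (h0 : 0 ≤ d') (hlt : d' < dt)
    -- parallel trends at (d', 0) and at (0, 0):
    (hPT : ∀ a ∈ ({d', 0} : Set ℝ),
      CE dt (Ytpot a - Ytm1pot 0) = CE d' (Ytpot a - Ytm1pot 0)) :
    CE dt (Ytpot d' - Ytpot 0) = CE d' (Ytpot d' - Ytpot 0) := by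
  have key : Ytpot d' - Ytpot 0 =
      (Ytpot d' - Ytm1pot 0) - (Ytpot 0 - Ytm1pot 0) := by ring
  have h1 := hPT d' (Set.mem_insert _ _)
  have h2 := hPT 0 (Set.mem_insert_iff.mpr (Or.inr rfl))
  rw [key, hCE_sub dt (Ytpot d' - Ytm1pot 0) (Ytpot 0 - Ytm1pot 0),
    hCE_sub d' (Ytpot d' - Ytm1pot 0) (Ytpot 0 - Ytm1pot 0), h1, h2]
end

section
/- Neyman orthogonality of the score for Ψ_{d',t'} with respect to the outcome regression: the Gateaux derivative of the map μ ↦ E[ I{D=d}I{T=t}μ(X)/Π_{d,t} + I{D=d'}I{T=t'}ρ_{d,t}(X)(Y_T − μ(X))/(ρ_{d',t'}(X)Π_{d,t}) ] at the true μ⁰ in any bounded direction δ = μ − μ⁰ is zero, i.e. E[I{D=d}I{T=t}δ(X)/Π_{d,t}] − E[I{D=d'}I{T=t'}ρ_{d,t}(X)δ(X)/(ρ_{d',t'}(X)Π_{d,t})] = 0. -/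
open MeasureTheory

/-- Key tower-property lemma: for an a.e.-bounded `mX`-measurable `f` and a
measurable set `A`, `∫ 1_A · f = ∫ ρA · f` where `ρA` is a version of
`E[1_A | mX]`. -/
lemma aux_tower {Ω : Type*} {m : MeasurableSpace Ω} (μ : Measure Ω) [IsProbabilityMeasure μ]
    (mX : MeasurableSpace Ω) (hmX : mX ≤ m) (A : Set Ω) (hAm : MeasurableSet[m] A)
    (hAm' : MeasurableSet[m] A)
    (f ρA : Ω → ℝ) (hf : StronglyMeasurable[mX] f) (c : ℝ)
    (hfb : ∀ᵐ ω ∂μ, |f ω| ≤ c)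
    (hρA : μ[A.indicator (fun _ => (1 : ℝ)) | mX] =ᵐ[μ] ρA) :
    ∫ ω, A.indicator (fun _ => (1 : ℝ)) ω * f ω ∂μ = ∫ ω, ρA ω * f ω ∂μ := by
  set g : Ω → ℝ := A.indicator (fun _ => (1 : ℝ)) with hg
  have hg_int : Integrable g μ := by
    have hgm : StronglyMeasurable[m] g := stronglyMeasurable_const.indicator hAm'
    refine ⟨hgm.aestronglyMeasurable, ?_⟩
    refine HasFiniteIntegral.of_bounded (C := 1) ?_
    filter_upwards with ω
    by_cases hω : ω ∈ A <;> simp [hg, hω]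
  have hfg_int : Integrable (f * g) μ :=
    hg_int.bdd_mul ((hf.mono hmX).aestronglyMeasurable) (by
      filter_upwards [hfb] with ω hω; simpa using hω)
  have hcond : μ[f * g | mX] =ᵐ[μ] f * μ[g | mX] :=
    condExp_stronglyMeasurable_mul_of_bound hmX hf hg_int c (by
      filter_upwards [hfb] with ω hω; simpa using hω)
  have h1 : ∫ ω, g ω * f ω ∂μ = ∫ ω, (f * g) ω ∂μ := by
    congr 1; funext ω; simp [mul_comm]
  rw [h1, ← integral_condExp hmX]
  refine integral_congr_ae ?_
  filter_upwards [hcond, hρA] with ω h1 h2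
  rw [h1]; simp [Pi.mul_apply, h2, mul_comm]

/-- Neyman orthogonality of the score with respect to the
outcome regression. For any bounded `mX`-measurable direction `δ = μ - μ⁰`,
`E[1_{D=d,T=t} δ(X)/Π] − E[1_{D=d',T=t'} ρ_{d,t}(X) δ(X)/(ρ_{d',t'}(X)Π)] = 0`,
where `ρdt`, `ρ` are versions of `P(D=d,T=t|X)` and `P(D=d',T=t'|X)`
(the latter bounded away from zero) and `Pdt = Π_{d,t} > 0`. -/
theorem stmt_8 {Ω : Type*} (mX : MeasurableSpace Ω) {m : MeasurableSpace Ω} (μ : Measure Ω) [IsProbabilityMeasure μ]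
    (hmX : mX ≤ m)
    (D T : Ω → ℝ) (d t d' t' Pdt : ℝ)
    (A : ℝ → ℝ → Set Ω)
    (hA : ∀ d₀ t₀, A d₀ t₀ = {ω | D ω = d₀ ∧ T ω = t₀})
    (hAm : ∀ d₀ t₀, MeasurableSet (A d₀ t₀))
    (ρdt ρ δ : Ω → ℝ)
    (hρdt_meas : StronglyMeasurable[mX] ρdt)
    (hρ_meas : StronglyMeasurable[mX] ρ)
    (hδ_meas : StronglyMeasurable[mX] δ)
    (hδ_bdd : ∃ C, ∀ ω, |δ ω| ≤ C)
    (hρdt : μ[(A d t).indicator (fun _ => (1 : ℝ)) | mX] =ᵐ[μ] ρdt)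
    (hρ : μ[(A d' t').indicator (fun _ => (1 : ℝ)) | mX] =ᵐ[μ] ρ)
    (hρc : ∃ c > (0 : ℝ), ∀ ω, c ≤ ρ ω)
    (hPdt : Pdt = (μ (A d t)).toReal) (hPdtpos : 0 < Pdt) :
    (∫ ω, (A d t).indicator (fun _ => (1 : ℝ)) ω * δ ω / Pdt ∂μ)
      - ∫ ω, (A d' t').indicator (fun _ => (1 : ℝ)) ω * ρdt ω * δ ω / (ρ ω * Pdt) ∂μ
      = 0 := by
  obtain ⟨C, hC⟩ := hδ_bdd
  obtain ⟨c, hc, hcρ⟩ := hρc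
  have hρpos : ∀ ω, 0 < ρ ω := fun ω => lt_of_lt_of_le hc (hcρ ω)
  -- ρdt is a.e. bounded by 1
  have hρdt_bdd : ∀ᵐ ω ∂μ, |ρdt ω| ≤ 1 := by
    have h0 : (0 : Ω → ℝ) ≤ᵐ[μ] μ[(A d t).indicator (fun _ => (1 : ℝ)) | mX] :=
      condExp_nonneg (by
        filter_upwards with ω
        exact Set.indicator_nonneg (fun _ _ => zero_le_one) ω)
    have hind_int : Integrable ((A d t).indicator (fun _ => (1 : ℝ))) μ := by
      have hgm : StronglyMeasurable[m] ((A d t).indicator (fun _ => (1 : ℝ))) :=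
        stronglyMeasurable_const.indicator (hAm d t)
      refine ⟨hgm.aestronglyMeasurable, ?_⟩
      refine HasFiniteIntegral.of_bounded (C := 1) ?_
      filter_upwards with ω
      by_cases hω : ω ∈ A d t <;> simp [hω]
    have h1 : μ[(A d t).indicator (fun _ => (1 : ℝ)) | mX] ≤ᵐ[μ]
        μ[(fun _ => (1 : ℝ)) | mX] := by
      refine condExp_mono hind_int (integrable_const 1) ?_
      filter_upwards with ω
      exact Set.indicator_le_self' (fun _ _ => zero_le_one) ω
    have hconst : μ[(fun _ => (1 : ℝ)) | mX] = fun _ => (1 : ℝ) :=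
      condExp_const hmX 1
    filter_upwards [h0, h1, hρdt] with ω h0ω h1ω heq
    rw [hconst] at h1ω
    rw [← heq, abs_le]
    exact ⟨le_trans (by norm_num) h0ω, h1ω⟩
  -- first integral
  have hI1 : (∫ ω, (A d t).indicator (fun _ => (1 : ℝ)) ω * δ ω / Pdt ∂μ)
      = ∫ ω, ρdt ω * (δ ω / Pdt) ∂μ := by
    have h := aux_tower μ mX hmX (A d t) (hAm d t) (hAm d t) (fun ω => δ ω / Pdt) ρdt
      (((hδ_meas.measurable.div measurable_const).stronglyMeasurable : StronglyMeasurable[mX] _))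
      (C / Pdt)
      (by filter_upwards with ω
          rw [abs_div, abs_of_pos hPdtpos]
          gcongr
          exact hC ω) hρdt
    rw [← h]
    congr 1; funext ω; rw [mul_div_assoc]
  -- second integral
  set f2 : Ω → ℝ := fun ω => ρdt ω * δ ω / (ρ ω * Pdt) with hf2
  have hf2_meas : StronglyMeasurable[mX] f2 :=
    ((hρdt_meas.measurable.mul hδ_meas.measurable).div
      (hρ_meas.measurable.mul measurable_const)).stronglyMeasurable
  have hf2_bdd : ∀ᵐ ω ∂μ, |f2 ω| ≤ C / (c * Pdt) := by
    filter_upwards [hρdt_bdd] with ω hω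
    have hρP : 0 < ρ ω * Pdt := mul_pos (hρpos ω) hPdtpos
    have hcP : 0 < c * Pdt := mul_pos hc hPdtpos
    rw [hf2, abs_div, abs_of_pos hρP, abs_mul]
    have hC0 : 0 ≤ C := le_trans (abs_nonneg _) (hC ω)
    calc |ρdt ω| * |δ ω| / (ρ ω * Pdt) ≤ 1 * C / (c * Pdt) := by
          apply div_le_div₀ (mul_nonneg zero_le_one hC0)
            (mul_le_mul hω (hC ω) (abs_nonneg _) zero_le_one) hcP
          exact mul_le_mul_of_nonneg_right (hcρ ω) hPdtpos.le
      _ = C / (c * Pdt) := by rw [one_mul]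
  have hI2 : (∫ ω, (A d' t').indicator (fun _ => (1 : ℝ)) ω * ρdt ω * δ ω / (ρ ω * Pdt) ∂μ)
      = ∫ ω, ρdt ω * (δ ω / Pdt) ∂μ := by
    have h := aux_tower μ mX hmX (A d' t') (hAm d' t') (hAm d' t') f2 ρ hf2_meas (C / (c * Pdt))
      hf2_bdd hρ
    have hL : (∫ ω, (A d' t').indicator (fun _ => (1 : ℝ)) ω * ρdt ω * δ ω / (ρ ω * Pdt) ∂μ)
        = ∫ ω, (A d' t').indicator (fun _ => (1 : ℝ)) ω * f2 ω ∂μ := by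
      congr 1; funext ω; rw [hf2]; ring
    have hR : (∫ ω, ρ ω * f2 ω ∂μ) = ∫ ω, ρdt ω * (δ ω / Pdt) ∂μ := by
      congr 1; funext ω
      have h1 : ρ ω ≠ 0 := (hρpos ω).ne'
      have h2 : Pdt ≠ 0 := hPdtpos.ne'
      rw [hf2]
      field_simp
    rw [hL, h, hR]
  rw [hI1, hI2, sub_self]
end

section
/- Neyman orthogonality with respect to the propensity score: with μ⁰_{d'}(t',X) = E[Y_T|D=d',T=t',X] the true conditional mean and ρ⁰ the true propensities, for any bounded measurable perturbation direction δ_ρ of ρ_{d',t'}(·), E[ I{D=d'}I{T=t'}ρ⁰_{d,t}(X)(Y_T − μ⁰_{d'}(t',X))/(ρ⁰_{d',t'}(X)Π_{d,t}) · δ_ρ(X)/ρ⁰_{d',t'}(X) ] = 0. -/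
open MeasureTheory

private lemma aux_indicator_int {Ω : Type*} {m : MeasurableSpace Ω} {μ : MeasureTheory.Measure Ω}
    {f : Ω → ℝ} {s : Set Ω} (hf : MeasureTheory.Integrable f μ) (hs : MeasurableSet[m] s) :
    MeasureTheory.Integrable (s.indicator f) μ :=
  hf.indicator hs

/-- Neyman orthogonality with respect to the propensity score.
With `g` a version of the true conditional mean `μ⁰_{d'}(t',X) = E[Y_T|D=d',T=t',X]`
and `ρdt`, `ρ` versions of the true propensities `P(D=d,T=t|X)` (bounded) and
`P(D=d',T=t'|X)` (bounded away from zero), for any bounded `mX`-measurable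
perturbation direction `δρ`,
`E[1_{D=d',T=t'} ρ⁰_{d,t}(X)(Y_T − μ⁰_{d'}(t',X))/(ρ⁰_{d',t'}(X)Π) · δρ(X)/ρ⁰_{d',t'}(X)] = 0`. -/
theorem stmt_9 {Ω : Type*} (mX : MeasurableSpace Ω) {m : MeasurableSpace Ω} (μ : Measure Ω) [IsProbabilityMeasure μ]
    (hmX : mX ≤ m)
    (Y D T : Ω → ℝ) (d t d' t' Pdt : ℝ)
    (hY : Integrable Y μ)
    (A : ℝ → ℝ → Set Ω)
    (hA : ∀ d₀ t₀, A d₀ t₀ = {ω | D ω = d₀ ∧ T ω = t₀})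
    (hAm : ∀ d₀ t₀, MeasurableSet (A d₀ t₀))
    (ρdt ρ g δρ : Ω → ℝ)
    (hρdt_meas : StronglyMeasurable[mX] ρdt)
    (hρ_meas : StronglyMeasurable[mX] ρ)
    (hg_meas : StronglyMeasurable[mX] g)
    (hδρ_meas : StronglyMeasurable[mX] δρ)
    (hδρ_bdd : ∃ C, ∀ ω, |δρ ω| ≤ C)
    (hρdt_bdd : ∃ C, ∀ ω, |ρdt ω| ≤ C)
    (hρdt : μ[(A d t).indicator (fun _ => (1 : ℝ)) | mX] =ᵐ[μ] ρdt)
    (hρ : μ[(A d' t').indicator (fun _ => (1 : ℝ)) | mX] =ᵐ[μ] ρ)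
    (hρc : ∃ c > (0 : ℝ), ∀ ω, c ≤ ρ ω)
    (hg : μ[(A d' t').indicator Y | mX] =ᵐ[μ] fun ω => g ω * ρ ω)
    (hPdt : Pdt = (μ (A d t)).toReal) (hPdtpos : 0 < Pdt) :
    ∫ ω, (A d' t').indicator (fun _ => (1 : ℝ)) ω * ρdt ω * (Y ω - g ω) / (ρ ω * Pdt)
          * (δρ ω / ρ ω) ∂μ = 0 := by
  obtain ⟨c, hc0, hc⟩ := hρc
  obtain ⟨C1, hC1⟩ := hδρ_bdd
  obtain ⟨C2, hC2⟩ := hρdt_bdd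
  have hρ_pos : ∀ ω, 0 < ρ ω := fun ω => lt_of_lt_of_le hc0 (hc ω)
  have hρ_ne : ∀ ω, ρ ω ≠ 0 := fun ω => (hρ_pos ω).ne'
  -- the bounded mX-measurable multiplier
  set h : Ω → ℝ := fun ω => ρdt ω * δρ ω / (ρ ω * ρ ω * Pdt) with hh_def
  have hh_meas : StronglyMeasurable[mX] h :=
    ((hρdt_meas.measurable.mul hδρ_meas.measurable).div
      ((hρ_meas.measurable.mul hρ_meas.measurable).mul measurable_const)).stronglyMeasurable
  have hh_bdd : ∀ ω, |h ω| ≤ C2 * C1 / (c * c * Pdt) := by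
    intro ω
    have h1 : 0 ≤ C1 := le_trans (abs_nonneg _) (hC1 ω)
    have h2 : 0 ≤ C2 := le_trans (abs_nonneg _) (hC2 ω)
    have hden : c * c * Pdt ≤ ρ ω * ρ ω * Pdt :=
      mul_le_mul_of_nonneg_right
        (mul_le_mul (hc ω) (hc ω) hc0.le (hρ_pos ω).le) hPdtpos.le
    have hdenpos : 0 < c * c * Pdt := by positivity
    have hdenpos' : 0 < ρ ω * ρ ω * Pdt :=
      mul_pos (mul_pos (hρ_pos ω) (hρ_pos ω)) hPdtpos
    rw [hh_def, abs_div, abs_of_pos hdenpos', abs_mul]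
    exact div_le_div₀ (by positivity)
      (mul_le_mul (hC2 ω) (hC1 ω) (abs_nonneg _) h2) hdenpos hden
  have hh_aesm : @AEStronglyMeasurable Ω ℝ _ m m h μ := (hh_meas.mono hmX).aestronglyMeasurable
  -- integrability of g
  have hgρ_int : Integrable (fun ω => g ω * ρ ω) μ :=
    (integrable_condExp).congr hg
  have hg_int : Integrable g μ := by
    have : Integrable (fun ω => (ρ ω)⁻¹ * (g ω * ρ ω)) μ := by
      apply hgρ_int.bdd_mul (c := c⁻¹)
      · exact ((hρ_meas.measurable.mono hmX le_rfl).inv).aestronglyMeasurable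
      · refine Filter.Eventually.of_forall fun ω => ?_
        rw [norm_inv, Real.norm_eq_abs, abs_of_pos (hρ_pos ω)]
        exact inv_anti₀ hc0 (hc ω)
    exact this.congr (Filter.Eventually.of_forall fun ω => by
      show (ρ ω)⁻¹ * (g ω * ρ ω) = g ω
      rw [mul_comm (g ω) (ρ ω), inv_mul_cancel_left₀ (hρ_ne ω)])
  -- key pull-out identity
  have key : ∀ F f : Ω → ℝ, StronglyMeasurable[mX] F → Integrable f μ →
      Integrable (F * f) μ →
      ∫ ω, F ω * f ω ∂μ = ∫ ω, F ω * (μ[f|mX]) ω ∂μ := by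
    intro F f hF hf hFf
    have h1 := condExp_mul_of_stronglyMeasurable_left hF hFf hf
    have h2 : ∫ ω, (μ[F * f|mX]) ω ∂μ = ∫ ω, (F * f) ω ∂μ := integral_condExp hmX
    calc ∫ ω, F ω * f ω ∂μ = ∫ ω, (μ[F * f|mX]) ω ∂μ := h2.symm
      _ = ∫ ω, F ω * (μ[f|mX]) ω ∂μ := integral_congr_ae h1
  -- the two pieces
  set f1 : Ω → ℝ := (A d' t').indicator Y with hf1_def
  set f2 : Ω → ℝ := (A d' t').indicator (fun _ => (1 : ℝ)) with hf2_def
  have hAm' : MeasurableSet[m] (A d' t') := hAm d' t'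
  have hf2_meas : StronglyMeasurable[m] f2 :=
    stronglyMeasurable_const.indicator hAm'
  have hf1_int : Integrable f1 μ := aux_indicator_int hY hAm'
  have hf2_int : Integrable f2 μ := aux_indicator_int (integrable_const (1 : ℝ)) hAm'
  have hhf1_int : Integrable (h * f1) μ :=
    hf1_int.bdd_mul hh_aesm (Filter.Eventually.of_forall fun ω => hh_bdd ω)
  have hf2_abs : ∀ ω, |f2 ω| ≤ 1 := by
    intro ω
    rw [hf2_def]
    by_cases hω : ω ∈ A d' t' <;> simp [Set.indicator_apply, hω]
  have hhg_meas : StronglyMeasurable[mX] (fun ω => h ω * g ω) := hh_meas.mul hg_meas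
  have hhgf2_int : Integrable ((fun ω => h ω * g ω) * f2) μ := by
    have : Integrable (fun ω => (h ω * f2 ω) * g ω) μ := by
      apply hg_int.bdd_mul (c := C2 * C1 / (c * c * Pdt))
      · exact hh_aesm.mul (hf2_meas.aestronglyMeasurable)
      · refine Filter.Eventually.of_forall fun ω => ?_
        rw [Real.norm_eq_abs, abs_mul]
        calc |h ω| * |f2 ω| ≤ (C2 * C1 / (c * c * Pdt)) * 1 :=
              mul_le_mul (hh_bdd ω) (hf2_abs ω) (abs_nonneg _)
                (le_trans (abs_nonneg _) (hh_bdd ω))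
          _ = C2 * C1 / (c * c * Pdt) := mul_one _
    exact this.congr (Filter.Eventually.of_forall fun ω => by
      simp [Pi.mul_apply]; ring)
  -- compute each piece
  have eq1 : ∫ ω, h ω * f1 ω ∂μ = ∫ ω, h ω * (g ω * ρ ω) ∂μ := by
    rw [key h f1 hh_meas hf1_int hhf1_int]
    refine integral_congr_ae ?_
    filter_upwards [hg] with ω hω
    rw [hω]
  have eq2 : ∫ ω, (h ω * g ω) * f2 ω ∂μ = ∫ ω, (h ω * g ω) * ρ ω ∂μ := by
    rw [key (fun ω => h ω * g ω) f2 hhg_meas hf2_int hhgf2_int]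
    refine integral_congr_ae ?_
    filter_upwards [hρ] with ω hω
    rw [hω]
  -- rewrite the integrand
  have hpt : ∀ ω, (A d' t').indicator (fun _ => (1 : ℝ)) ω * ρdt ω * (Y ω - g ω) / (ρ ω * Pdt)
      * (δρ ω / ρ ω) = h ω * f1 ω - (h ω * g ω) * f2 ω := by
    intro ω
    have hind : f1 ω = f2 ω * Y ω := by
      rw [hf1_def, hf2_def]
      by_cases hω : ω ∈ A d' t' <;> simp [Set.indicator_apply, hω]
    rw [hind, hh_def]
    field_simp
    ring
  calc ∫ ω, (A d' t').indicator (fun _ => (1 : ℝ)) ω * ρdt ω * (Y ω - g ω) / (ρ ω * Pdt)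
          * (δρ ω / ρ ω) ∂μ
      = ∫ ω, h ω * f1 ω - (h ω * g ω) * f2 ω ∂μ := by
        exact integral_congr_ae (Filter.Eventually.of_forall hpt)
    _ = (∫ ω, h ω * f1 ω ∂μ) - ∫ ω, (h ω * g ω) * f2 ω ∂μ := by
        exact integral_sub hhf1_int hhgf2_int
    _ = 0 := by
        rw [eq1, eq2]
        ring_nf
end

section
/- Panel identification via first differences: under conditional parallel trends (E[Y_t(d_t') − Y_{t-1}(d_{t-1}'') | D_t=d_t, D_{t-1}=d_{t-1}'', X] = E[Y_t(d_t') − Y_{t-1}(d_{t-1}'') | D_t=d_t', D_{t-1}=d_{t-1}'', X]) and no anticipation (E[Y_{t-1}(d_t) − Y_{t-1}(d_t') | D_t=d_t, D_{t-1}, X] = 0), the conditional ATET satisfies E[Y_t(d_t) − Y_t(d_t') | D_t=d_t, D_{t-1}, X] = E[Y_t − Y_{t-1} | D_t=d_t, D_{t-1}, X] − E[Y_t − Y_{t-1} | D_t=d_t', D_{t-1}, X]. -/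
/-- panel identification via first differences.
`CE a f` abstracts `E[f | D_t = a, D_{t-1}, X]` (a function of ω through
`(D_{t-1}, X)`); `Ytpot a = Y_t(a)` and `Ytm1pot a = Y_{t-1}(a)` are potential
outcomes indexed by the period-t dose (the period t-1 treatment being held at its
realized value `d_{t-1}''`, so that `Y_{t-1}(d_{t-1}'') = Ytm1pot dt'` under the
control dose); `Yt`, `Ytm1` are the observed outcomes with the observational rule
imposed under the relevant conditioning. Under conditional parallel trends and
no anticipation, the conditional ATET equals the difference of observed
first-difference regressions. -/
theorem stmt_11 {Ω : Type*}
    (CE : ℝ → (Ω → ℝ) → Ω → ℝ)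
    (hCE_sub : ∀ a f g, CE a (f - g) = CE a f - CE a g)
    (Ytpot Ytm1pot : ℝ → Ω → ℝ)
    (Yt Ytm1 : Ω → ℝ)
    (dt dt' : ℝ)
    -- conditional parallel trends:
    (hPT : CE dt (Ytpot dt' - Ytm1pot dt') = CE dt' (Ytpot dt' - Ytm1pot dt'))
    -- no anticipation: E[Y_{t-1}(d_t) − Y_{t-1}(d_t') | D_t=d_t, D_{t-1}, X] = 0
    (hNA : CE dt (Ytm1pot dt - Ytm1pot dt') = 0)
    -- observational rule on {D_t = a} for a ∈ {dt, dt'}: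
    (hobs : ∀ a ∈ ({dt, dt'} : Set ℝ), CE a Yt = CE a (Ytpot a) ∧ CE a Ytm1 = CE a (Ytm1pot a)) :
    CE dt (Ytpot dt - Ytpot dt')
      = CE dt (Yt - Ytm1) - CE dt' (Yt - Ytm1) := by
  obtain ⟨h1, h2⟩ := hobs dt (Or.inl rfl)
  obtain ⟨h3, h4⟩ := hobs dt' (Or.inr rfl)
  rw [hCE_sub, hCE_sub] at hPT
  rw [hCE_sub] at hNA
  rw [hCE_sub]
  rw [hCE_sub dt Yt Ytm1, hCE_sub dt' Yt Ytm1, h1, h2, h3, h4]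
  funext ω
  have := congrFun hPT ω
  have := congrFun hNA ω
  simp only [Pi.sub_apply, Pi.zero_apply] at *
  linarith
end
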